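/- The policy gradient admits the weighted direct effect expression: V'(p) = μ π_0(p) Σ_{k=0}^{K−1} (λ_k'(p)/λ_k(p)) Σ_{i=k+1}^K π_i(p), where V(q) = Σ_{k=0}^K π_k(q) λ_k(q). -/

import Mathlib

/-!
Detailed balance and normalization give `V = μ (1 - π₀)`, so `V' = -μ π₀'`. Detailed balance also
makes the logarithmic derivatives telescope, `(log π_i)' = (log π₀)' + Σ_{k<i} (log λ_k)'`, and
averaging this against `π` (where `Σ π_i (log π_i)' = (Σ π_i)' = 0`) expresses `(log π₀)'` through
the `(log λ_k)'`, weighted by the tail masses `Σ_{i>k} π_i`.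
-/

open Finset

theorem Finset.sum_range_succ_mul_sum_range {R : Type*} [CommSemiring R] (n : ℕ) (f g : ℕ → R) :
    ∑ i ∈ range (n + 1), f i * ∑ k ∈ range i, g k
      = ∑ k ∈ range n, g k * ∑ i ∈ Icc (k + 1) n, f i := by
  simp only [mul_sum]
  rw [sum_comm' (t' := range n) (s' := fun k => Icc (k + 1) n)]
  · exact sum_congr rfl fun _ _ => sum_congr rfl fun _ _ => mul_comm _ _
  · intro i k
    simp only [mem_range, mem_Icc]
    omega

theorem sum_mul_eq_mul_one_sub_of_detailed_balance {R : Type*} [CommRing R] {K : ℕ} {μ : R}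
    {lam pr : ℕ → R} (hlamK : lam K = 0) (hsum : ∑ k ∈ range (K + 1), pr k = 1)
    (hdb : ∀ k < K, lam k * pr k = μ * pr (k + 1)) :
    ∑ k ∈ range (K + 1), pr k * lam k = μ * (1 - pr 0) := by
  rw [sum_range_succ' pr] at hsum
  rw [sum_range_succ, hlamK, mul_zero, add_zero,
    sum_congr rfl fun k hk => (mul_comm _ _).trans (hdb k (mem_range.mp hk)), ← mul_sum]
  rw [eq_sub_of_add_eq hsum]

section LogDeriv

variable {𝕜 𝕜' : Type*} [NontriviallyNormedField 𝕜] [NontriviallyNormedField 𝕜']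
  [NormedAlgebra 𝕜 𝕜']

theorem logDeriv_eq_add_of_mul_eq_const_mul {f g h : 𝕜 → 𝕜'} {c : 𝕜'} {x : 𝕜} (hc : c ≠ 0)
    (hfgh : ∀ y, f y * g y = c * h y) (hf : f x ≠ 0) (hg : g x ≠ 0)
    (hdf : DifferentiableAt 𝕜 f x) (hdg : DifferentiableAt 𝕜 g x) :
    logDeriv h x = logDeriv f x + logDeriv g x := by
  rw [← logDeriv_mul x hf hg hdf hdg, funext hfgh, logDeriv_const_mul x c hc]

theorem sum_mul_logDeriv_eq_zero {n : ℕ} {π : ℕ → 𝕜 → 𝕜'} {c : 𝕜'} {x : 𝕜}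
    (hsum : ∀ y, ∑ k ∈ range n, π k y = c) (hdiff : ∀ k < n, DifferentiableAt 𝕜 (π k) x)
    (hne : ∀ k < n, π k x ≠ 0) :
    ∑ k ∈ range n, π k x * logDeriv (π k) x = 0 := by
  calc ∑ k ∈ range n, π k x * logDeriv (π k) x
      = ∑ k ∈ range n, deriv (π k) x :=
        sum_congr rfl fun k hk => mul_div_cancel₀ _ (hne k (mem_range.mp hk))
    _ = deriv (fun y => ∑ k ∈ range n, π k y) x :=
        (deriv_fun_sum fun k hk => hdiff k (mem_range.mp hk)).symm
    _ = 0 := by simp only [hsum, deriv_const]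

theorem logDeriv_eq_logDeriv_zero_add_sum_of_detailed_balance {K : ℕ} {μ : 𝕜'} {x : 𝕜}
    {lam π : ℕ → 𝕜 → 𝕜'} (hμ : μ ≠ 0) (hdb : ∀ y, ∀ k < K, lam k y * π k y = μ * π (k + 1) y)
    (hlam : ∀ k < K, lam k x ≠ 0) (hπ : ∀ k < K, π k x ≠ 0)
    (hdiffLam : ∀ k < K, DifferentiableAt 𝕜 (lam k) x)
    (hdiffπ : ∀ k < K, DifferentiableAt 𝕜 (π k) x) :
    ∀ i ≤ K, logDeriv (π i) x = logDeriv (π 0) x + ∑ k ∈ range i, logDeriv (lam k) x := by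
  intro i
  induction i with
  | zero => simp
  | succ i ih =>
    intro hi
    rw [logDeriv_eq_add_of_mul_eq_const_mul hμ (fun y => hdb y i hi) (hlam i hi) (hπ i hi)
      (hdiffLam i hi) (hdiffπ i hi), ih (Nat.le_of_succ_le hi), sum_range_succ]
    ring

end LogDeriv

theorem weighted_direct_effect_expression_general
    (K : ℕ) (μ : ℝ) (hμ : 0 < μ)
    (lam pr : ℕ → ℝ → ℝ) (p : ℝ)
    (hlamK : ∀ q, lam K q = 0)
    (hlampos : ∀ q, ∀ k < K, 0 < lam k q)
    (hprpos : ∀ q, ∀ k ≤ K, 0 < pr k q)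
    (hsum : ∀ q, ∑ k ∈ Finset.range (K + 1), pr k q = 1)
    (hdb : ∀ q, ∀ k < K, lam k q * pr k q = μ * pr (k + 1) q)
    (hdiffLam : ∀ k ≤ K, DifferentiableAt ℝ (lam k) p)
    (hdiffPr : ∀ k ≤ K, DifferentiableAt ℝ (pr k) p) :
    deriv (fun q => ∑ k ∈ Finset.range (K + 1), pr k q * lam k q) p
      = μ * pr 0 p * ∑ k ∈ Finset.range K,
          deriv (lam k) p / lam k p * ∑ i ∈ Finset.Icc (k + 1) K, pr i p := by
  have hV : (fun q => ∑ k ∈ range (K + 1), pr k q * lam k q) = fun q => μ * (1 - pr 0 q) :=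
    funext fun q => sum_mul_eq_mul_one_sub_of_detailed_balance (hlamK q) (hsum q) (hdb q)
  have hlogPr := logDeriv_eq_logDeriv_zero_add_sum_of_detailed_balance hμ.ne' hdb
    (fun k hk => (hlampos p k hk).ne') (fun k hk => (hprpos p k hk.le).ne')
    (fun k hk => hdiffLam k hk.le) (fun k hk => hdiffPr k hk.le)
  have hbalance := sum_mul_logDeriv_eq_zero hsum (fun k hk => hdiffPr k (Nat.le_of_lt_succ hk))
    (fun k hk => (hprpos p k (Nat.le_of_lt_succ hk)).ne')
  rw [sum_congr rfl fun i hi => by rw [hlogPr i (Nat.le_of_lt_succ (mem_range.mp hi))],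
    sum_congr rfl fun i _ => mul_add _ _ _, sum_add_distrib, ← sum_mul, hsum p, one_mul,
    sum_range_succ_mul_sum_range] at hbalance
  have hderivPr0 : deriv (pr 0) p = pr 0 p * logDeriv (pr 0) p :=
    (mul_div_cancel₀ _ (hprpos p 0 K.zero_le).ne').symm
  rw [hV, deriv_const_mul_field, deriv_const_sub, hderivPr0, eq_neg_of_add_eq_zero_left hbalance]
  simp only [logDeriv_apply]
  ring

/-- The policy gradient admits the weighted direct effect expression:
`V'(p) = μ π₀(p) Σ_{k=0}^{K−1} (λ_k'(p)/λ_k(p)) Σ_{i=k+1}^K π_i(p)`,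
where `V(q) = Σ_{k=0}^K π_k(q) λ_k(q)`. -/
theorem weighted_direct_effect_expression
    (K : ℕ) (hK : 1 ≤ K) (μ : ℝ) (hμ : 0 < μ)
    (lam pr : ℕ → ℝ → ℝ) (p : ℝ)
    (hlamK : ∀ q, lam K q = 0)
    (hlampos : ∀ q, ∀ k < K, 0 < lam k q)
    (hprpos : ∀ q, ∀ k ≤ K, 0 < pr k q)
    (hsum : ∀ q, ∑ k ∈ Finset.range (K + 1), pr k q = 1)
    (hdb : ∀ q, ∀ k < K, lam k q * pr k q = μ * pr (k + 1) q)
    (hdiffLam : ∀ k ≤ K, DifferentiableAt ℝ (lam k) p)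
    (hdiffPr : ∀ k ≤ K, DifferentiableAt ℝ (pr k) p) :
    deriv (fun q => ∑ k ∈ Finset.range (K + 1), pr k q * lam k q) p
      = μ * pr 0 p * ∑ k ∈ Finset.range K,
          deriv (lam k) p / lam k p * ∑ i ∈ Finset.Icc (k + 1) K, pr i p :=
  weighted_direct_effect_expression_general K μ hμ lam pr p hlamK hlampos hprpos hsum hdb hdiffLam
    hdiffPr
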